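/- Let (σ, α) be a bipartite combinatorial map on a nonempty finite set H rooted at r. Then: (a) the adjacency graph on the vertices of (σ,α) is connected; (b) for every h ∈ H, the distances d(vertex(h)) and d(vertex(α(h))) from the root-vertex differ by exactly one; (c) the geodesic orientation, defined by I = {h ∈ H : d(vertex(h)) = d(vertex(α(h))) + 1} and O = H∖I, is an orientation (α(I) = O) and is left-connected: for every h ∈ H there exists q > 0 with β^q(h) = r, where β is its backward function. -/

import Mathlib

/-- `(σ,α)` is a combinatorial map. -/
def IsCombMap {X : Type*} (σ α : Equiv.Perm X) : Prop :=
  (∀ h, α h ≠ h) ∧ (∀ h, α (α h) = h) ∧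
    ∀ x y : X, ∃ g ∈ Subgroup.closure ({σ, α} : Set (Equiv.Perm X)), g x = y

/-- The backward function of an orientation with ingoing set `I`. -/
noncomputable def backward {X : Type*} (σ α : Equiv.Perm X) (I : Set X) (h : X) : X := by
  classical
  exact if h ∈ I then σ (α h) else σ h

/-- Half-edges belong to the same vertex iff they are in the same `σ`-orbit. -/
def vertexSetoid {H : Type*} (σ : Equiv.Perm H) : Setoid H :=
  ⟨σ.SameCycle,
    ⟨fun x => Equiv.Perm.SameCycle.refl σ x, fun h => h.symm, fun h₁ h₂ => h₁.trans h₂⟩⟩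

/-- The adjacency graph on the vertices (i.e. `σ`-orbits) of the map `(σ,α)`:
two distinct vertices are adjacent if some edge `{h, α h}` joins them. -/
def vertexGraph {H : Type*} (σ α : Equiv.Perm H) :
    SimpleGraph (Quotient (vertexSetoid σ)) where
  Adj u v := u ≠ v ∧ ∃ h : H,
    (Quotient.mk (vertexSetoid σ) h = u ∧ Quotient.mk (vertexSetoid σ) (α h) = v) ∨
    (Quotient.mk (vertexSetoid σ) h = v ∧ Quotient.mk (vertexSetoid σ) (α h) = u)
  symm := by
    constructor
    rintro u v ⟨hne, h, hh⟩
    exact ⟨hne.symm, h, hh.symm⟩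
  loopless := by
    constructor
    rintro u ⟨hne, -⟩
    exact hne rfl

/-! The vertex graph is connected because `σ` fixes vertices and `α` moves along an edge. The
distance `D` to the root-vertex is constant on vertices and, by bipartiteness, changes by exactly
one along every edge. A half-edge `h` is ingoing when `α h` is one step closer to
the root, so `β` runs around the current vertex (`β = σ` on outgoing half-edges) until it meets
an ingoing half-edge, which every vertex other than the root-vertex has, and then moves one step
closer via `σ ∘ α`. On the root-vertex no half-edge is ingoing and `β` cycles through `σ`
until it reaches `r`. -/

open SimpleGraph

namespace SimpleGraph

variable {V : Type*} {G : SimpleGraph V}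

theorem exists_adj_dist_eq_add_one {u v : V} (h : G.dist v u ≠ 0) :
    ∃ w, G.Adj v w ∧ G.dist v u = G.dist w u + 1 := by
  obtain ⟨p, hp⟩ := exists_walk_of_dist_ne_zero h
  cases p with
  | nil => exact (h hp.symm).elim
  | cons hadj q =>
    refine ⟨_, hadj, le_antisymm ?_ ?_⟩
    · obtain ⟨q', hq'⟩ := q.reachable.exists_walk_length_eq_dist
      simpa [hq'] using dist_le (q'.cons hadj)
    · have := dist_le q
      simp only [Walk.length_cons] at hp
      omega

theorem Coloring.dist_eq_add_one_or_of_adj (c : G.Coloring Bool) (hconn : G.Connected)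
    {u v w : V} (hadj : G.Adj v w) :
    G.dist v u = G.dist w u + 1 ∨ G.dist w u = G.dist v u + 1 := by
  have hne : G.dist u v ≠ G.dist u w := by
    intro heq
    obtain ⟨p, hp⟩ := hconn.exists_walk_length_eq_dist u v
    obtain ⟨q, hq⟩ := hconn.exists_walk_length_eq_dist u w
    have hpq := (c.even_length_iff_congr p).symm.trans
      ((hp.trans heq).trans hq.symm ▸ c.even_length_iff_congr q)
    exact c.valid hadj (Bool.eq_iff_iff.mpr (by tauto))
  rw [dist_comm, dist_comm (u := w)]
  rcases hadj.diff_dist_adj (u := u) with h | h | h <;> omega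

end SimpleGraph

section VertexGraph

variable {H : Type*} {σ α : Equiv.Perm H}

theorem mk_apply_eq_mk (σ : Equiv.Perm H) (h : H) :
    Quotient.mk (vertexSetoid σ) (σ h) = Quotient.mk (vertexSetoid σ) h :=
  Quotient.sound ⟨-1, by simp⟩

theorem reachable_mk_mk_alpha (x : H) :
    (vertexGraph σ α).Reachable (Quotient.mk _ x) (Quotient.mk _ (α x)) := by
  by_cases he : Quotient.mk (vertexSetoid σ) x = Quotient.mk _ (α x)
  · exact he ▸ Reachable.refl _
  · exact Adj.reachable ⟨he, x, Or.inl ⟨rfl, rfl⟩⟩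

theorem reachable_mk_mk_apply_of_mem_closure {g : Equiv.Perm H}
    (hg : g ∈ Subgroup.closure ({σ, α} : Set (Equiv.Perm H))) (x : H) :
    (vertexGraph σ α).Reachable (Quotient.mk _ x) (Quotient.mk _ (g x)) := by
  induction hg using Subgroup.closure_induction generalizing x with
  | mem z hz =>
    rcases hz with rfl | rfl
    exacts [by rw [mk_apply_eq_mk], reachable_mk_mk_alpha x]
  | one => rfl
  | mul a b _ _ ha hb => exact (hb x).trans (ha (b x))
  | inv a _ ha => simpa using (ha (a⁻¹ x)).symm

theorem IsCombMap.connected_vertexGraph [Nonempty H] (hmap : IsCombMap σ α) :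
    (vertexGraph σ α).Connected := by
  rw [connected_iff]
  refine ⟨fun u v => ?_, .map (Quotient.mk _) ‹_›⟩
  induction u using Quotient.ind with | _ x => ?_
  induction v using Quotient.ind with | _ y => ?_
  obtain ⟨g, hg, rfl⟩ := hmap.2.2 x y
  exact reachable_mk_mk_apply_of_mem_closure hg x

theorem exists_mk_eq_and_mk_apply_eq_of_adj (hα : Function.Involutive α)
    {u v : Quotient (vertexSetoid σ)} (hadj : (vertexGraph σ α).Adj u v) :
    ∃ h, Quotient.mk _ h = u ∧ Quotient.mk _ (α h) = v := by
  obtain ⟨-, h, ⟨rfl, rfl⟩ | ⟨rfl, rfl⟩⟩ := hadj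
  · exact ⟨h, rfl, rfl⟩
  · exact ⟨α h, rfl, by rw [hα h]⟩

def vertexGraphColoring (c : Quotient (vertexSetoid σ) → Bool)
    (hc : ∀ h, c (Quotient.mk _ h) ≠ c (Quotient.mk _ (α h))) :
    (vertexGraph σ α).Coloring Bool :=
  Coloring.mk c fun {_ _} hadj => by
    obtain ⟨-, h, ⟨rfl, rfl⟩ | ⟨rfl, rfl⟩⟩ := hadj
    exacts [hc h, (hc h).symm]

theorem vertexGraph_adj_mk_mk_apply {c : Quotient (vertexSetoid σ) → Bool}
    (hc : ∀ h, c (Quotient.mk _ h) ≠ c (Quotient.mk _ (α h))) (h : H) :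
    (vertexGraph σ α).Adj (Quotient.mk _ h) (Quotient.mk _ (α h)) :=
  ⟨fun he => hc h (congrArg c he), h, Or.inl ⟨rfl, rfl⟩⟩

end VertexGraph

section Backward

variable {H : Type*} {σ α : Equiv.Perm H} {I : Set H}

theorem backward_of_mem {h : H} (hh : h ∈ I) : backward σ α I h = σ (α h) := by
  simp [backward, hh]

theorem backward_of_notMem {h : H} (hh : h ∉ I) : backward σ α I h = σ h := by
  simp [backward, hh]

theorem iterate_backward_of_forall_notMem {h : H} {m : ℕ} (hI : ∀ k < m, (σ ^ k) h ∉ I) :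
    (backward σ α I)^[m] h = (σ ^ m) h := by
  induction m with
  | zero => rfl
  | succ m ih =>
    rw [Function.iterate_succ_apply', ih fun k hk => hI k (by omega),
      backward_of_notMem (hI m (by omega)), pow_succ', Equiv.Perm.mul_apply]

theorem exists_iterate_backward_eq_pow_mem {h : H} {i : ℕ} (hi : (σ ^ i) h ∈ I) :
    ∃ m, (backward σ α I)^[m] h = (σ ^ m) h ∧ (σ ^ m) h ∈ I := by
  classical
  have hex : ∃ m, (σ ^ m) h ∈ I := ⟨i, hi⟩
  exact ⟨Nat.find hex, iterate_backward_of_forall_notMem fun k hk => Nat.find_min hex hk,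
    Nat.find_spec hex⟩

theorem exists_iterate_backward_eq_of_level [Finite H] {D : H → ℕ} {r : H}
    (hD : ∀ x y, σ.SameCycle x y → D x = D y)
    (hzero : ∀ h, D h = 0 → σ.SameCycle h r)
    (hdesc : ∀ h, D h ≠ 0 → ∃ h₀, D h₀ = D (α h₀) + 1 ∧ σ.SameCycle h h₀) (h : H) :
    ∃ q, 0 < q ∧ (backward σ α {h | D h = D (α h) + 1})^[q] h = r := by
  have hDpow : ∀ x (k : ℕ), D ((σ ^ k) x) = D x := fun x k => (hD _ _ ⟨k, rfl⟩).symm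
  induction hn : D h generalizing h with
  | zero =>
    obtain ⟨i, hi, -, rfl⟩ := (hzero h hn).exists_pow_eq''
    refine ⟨i, hi, iterate_backward_of_forall_notMem fun k _ hk => ?_⟩
    have := hDpow h k
    simp only [Set.mem_ofPred_eq] at hk
    omega
  | succ n ih =>
    obtain ⟨h₀, hh₀, hsc⟩ := hdesc h (by omega)
    obtain ⟨i, rfl⟩ := hsc.exists_nat_pow_eq
    obtain ⟨m, hm, hmI⟩ :=
      exists_iterate_backward_eq_pow_mem (α := α) (I := {h | D h = D (α h) + 1}) hh₀
    have hnext : D (σ (α ((σ ^ m) h))) = n := by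
      have hσ := hDpow (α ((σ ^ m) h)) 1
      rw [pow_one] at hσ
      have := hDpow h m
      simp only [Set.mem_ofPred_eq] at hmI
      omega
    obtain ⟨q, -, hq⟩ := ih _ hnext
    refine ⟨q + (m + 1), by omega, ?_⟩
    rw [Function.iterate_add_apply, Function.iterate_succ_apply', hm, backward_of_mem hmI, hq]

theorem image_setOf_eq_add_one_eq_compl (hα : Function.Involutive α) {D : H → ℕ}
    (hD : ∀ h, D h = D (α h) + 1 ∨ D (α h) = D h + 1) :
    α '' {h | D h = D (α h) + 1} = {h | D h = D (α h) + 1}ᶜ := by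
  rw [hα.image_eq_preimage_symm]
  ext h
  simp only [Set.mem_preimage, Set.mem_ofPred_eq, Set.mem_compl_iff, hα h]
  have := hD h
  omega

end Backward

theorem geodesic_orientation_left_connected_general {H : Type*} [Fintype H]
    (σ α : Equiv.Perm H) (hmap : IsCombMap σ α) (r : H)
    (hbip : ∃ c : Quotient (vertexSetoid σ) → Bool,
      ∀ h : H, c (Quotient.mk (vertexSetoid σ) h) ≠ c (Quotient.mk (vertexSetoid σ) (α h))) :
    (vertexGraph σ α).Connected ∧
    (∀ h : H,
      (vertexGraph σ α).dist (Quotient.mk (vertexSetoid σ) h) (Quotient.mk (vertexSetoid σ) r) =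
        (vertexGraph σ α).dist (Quotient.mk (vertexSetoid σ) (α h))
          (Quotient.mk (vertexSetoid σ) r) + 1 ∨
      (vertexGraph σ α).dist (Quotient.mk (vertexSetoid σ) (α h)) (Quotient.mk (vertexSetoid σ) r) =
        (vertexGraph σ α).dist (Quotient.mk (vertexSetoid σ) h)
          (Quotient.mk (vertexSetoid σ) r) + 1) ∧
    (α '' {h : H |
        (vertexGraph σ α).dist (Quotient.mk (vertexSetoid σ) h) (Quotient.mk (vertexSetoid σ) r) =
          (vertexGraph σ α).dist (Quotient.mk (vertexSetoid σ) (α h))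
            (Quotient.mk (vertexSetoid σ) r) + 1} =
      {h : H |
        (vertexGraph σ α).dist (Quotient.mk (vertexSetoid σ) h) (Quotient.mk (vertexSetoid σ) r) =
          (vertexGraph σ α).dist (Quotient.mk (vertexSetoid σ) (α h))
            (Quotient.mk (vertexSetoid σ) r) + 1}ᶜ) ∧
    (∀ h : H, ∃ q : ℕ, 0 < q ∧
      (backward σ α {h : H |
        (vertexGraph σ α).dist (Quotient.mk (vertexSetoid σ) h) (Quotient.mk (vertexSetoid σ) r) =
          (vertexGraph σ α).dist (Quotient.mk (vertexSetoid σ) (α h))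
            (Quotient.mk (vertexSetoid σ) r) + 1})^[q] h = r) := by
  obtain ⟨c, hc⟩ := hbip
  have : Nonempty H := ⟨r⟩
  have hα : Function.Involutive α := hmap.2.1
  have hconn := hmap.connected_vertexGraph
  have hstep := fun h : H =>
    (vertexGraphColoring c hc).dist_eq_add_one_or_of_adj (u := Quotient.mk _ r) hconn
      (vertexGraph_adj_mk_mk_apply hc h)
  refine ⟨hconn, hstep, image_setOf_eq_add_one_eq_compl hα hstep,
    exists_iterate_backward_eq_of_level (fun x y hxy => by rw [Quotient.sound hxy])
      (fun h h0 => Quotient.exact (hconn.dist_eq_zero_iff.mp h0)) fun h hh => ?_⟩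
  obtain ⟨u, hadj, hdist⟩ := exists_adj_dist_eq_add_one hh
  obtain ⟨h₀, hh₀, rfl⟩ := exists_mk_eq_and_mk_apply_eq_of_adj hα hadj
  exact ⟨h₀, hh₀ ▸ hdist, Quotient.exact hh₀.symm⟩

/-- for a bipartite combinatorial map rooted at `r`: (a) the
adjacency graph on vertices is connected; (b) the distances to the root-vertex of the
two endpoints of any edge differ by exactly one; (c) the geodesic orientation (whose
ingoing half-edges are those pointing away from the root-vertex in distance) is an
orientation and is left-connected. -/
theorem geodesic_orientation_left_connected {H : Type*} [Fintype H] [Nonempty H]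
    (σ α : Equiv.Perm H) (hmap : IsCombMap σ α) (r : H)
    (hbip : ∃ c : Quotient (vertexSetoid σ) → Bool,
      ∀ h : H, c (Quotient.mk (vertexSetoid σ) h) ≠ c (Quotient.mk (vertexSetoid σ) (α h))) :
    (vertexGraph σ α).Connected ∧
    (∀ h : H,
      (vertexGraph σ α).dist (Quotient.mk (vertexSetoid σ) h) (Quotient.mk (vertexSetoid σ) r) =
        (vertexGraph σ α).dist (Quotient.mk (vertexSetoid σ) (α h))
          (Quotient.mk (vertexSetoid σ) r) + 1 ∨
      (vertexGraph σ α).dist (Quotient.mk (vertexSetoid σ) (α h)) (Quotient.mk (vertexSetoid σ) r) =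
        (vertexGraph σ α).dist (Quotient.mk (vertexSetoid σ) h)
          (Quotient.mk (vertexSetoid σ) r) + 1) ∧
    (α '' {h : H |
        (vertexGraph σ α).dist (Quotient.mk (vertexSetoid σ) h) (Quotient.mk (vertexSetoid σ) r) =
          (vertexGraph σ α).dist (Quotient.mk (vertexSetoid σ) (α h))
            (Quotient.mk (vertexSetoid σ) r) + 1} =
      {h : H |
        (vertexGraph σ α).dist (Quotient.mk (vertexSetoid σ) h) (Quotient.mk (vertexSetoid σ) r) =
          (vertexGraph σ α).dist (Quotient.mk (vertexSetoid σ) (α h))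
            (Quotient.mk (vertexSetoid σ) r) + 1}ᶜ) ∧
    (∀ h : H, ∃ q : ℕ, 0 < q ∧
      (backward σ α {h : H |
        (vertexGraph σ α).dist (Quotient.mk (vertexSetoid σ) h) (Quotient.mk (vertexSetoid σ) r) =
          (vertexGraph σ α).dist (Quotient.mk (vertexSetoid σ) (α h))
            (Quotient.mk (vertexSetoid σ) r) + 1})^[q] h = r) :=
  geodesic_orientation_left_connected_general σ α hmap r hbip
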